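/- arXiv:2308.09283 — 3 statements merged into one kernel-verified Lean document; each statement's English description precedes it below -/
import Mathlib

section
/- Let p be analytic on the unit disc with p(0) = 1, and suppose α ≥ e(e−1) + 1. Assume that for all z in the unit disc, |1 + α z p'(z) + z² p''(z)| < e. Let r = e^{e^{iθ}} and s = m e^{iθ} r with m ≥ 1 and θ ∈ (0, 2π), and let t satisfy Re(1 + t/s) ≥ m(1 + cos θ). Then the function ψ(r,s,t;z) = 1 + α s + t satisfies |ψ − 1| = |α s + t| ≥ e − 1. -/
open Real Complex

lemma stmt_6_aux (m α c : ℝ) (hm : 1 ≤ m)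
    (hα : Real.exp 1 * (Real.exp 1 - 1) + 1 ≤ α)
    (hc1 : -1 ≤ c) (hc2 : c ≤ 1) :
    Real.exp 1 - 1 ≤ m * Real.exp c * (α - 1 + m * (1 + c)) := by
  have hα1 : (1:ℝ) ≤ α - 1 := by nlinarith [Real.add_one_le_exp (1:ℝ)]
  have hEpos : (0:ℝ) < Real.exp c := Real.exp_pos c
  have he1 : Real.exp (-1) * Real.exp 1 = 1 := by rw [← Real.exp_add]; simp
  have hE : Real.exp (-1) * (c + 2) ≤ Real.exp c := by
    have := Real.add_one_le_exp (c + 1)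
    have h2 : Real.exp (-1) * Real.exp (c + 1) = Real.exp c := by
      rw [← Real.exp_add]; ring_nf
    nlinarith [Real.exp_pos (-1)]
  have h0 : α + c ≤ m * (α - 1 + m * (1 + c)) := by
    have hA : 0 ≤ (m - 1) * (α - 1) := mul_nonneg (by linarith) (by linarith)
    have hB : 0 ≤ (m * m - 1) * (1 + c) := mul_nonneg (by nlinarith) (by linarith)
    nlinarith
  have h1 : Real.exp c * (α + c) ≤ m * Real.exp c * (α - 1 + m * (1 + c)) := by
    have := mul_le_mul_of_nonneg_left h0 hEpos.le
    nlinarith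
  have h3 : Real.exp (-1) * ((c + 2) * (α + c)) ≤ Real.exp c * (α + c) := by
    have hαc : (0:ℝ) ≤ α + c := by linarith
    nlinarith [hE]
  have h4 : Real.exp (-1) * (α - 1) ≤ Real.exp (-1) * ((c + 2) * (α + c)) := by
    have hgap : α - 1 ≤ (c + 2) * (α + c) := by
      nlinarith [sq_nonneg (c + 1), mul_nonneg (show (0:ℝ) ≤ α by linarith) (show (0:ℝ) ≤ c + 1 by linarith)]
    exact mul_le_mul_of_nonneg_left hgap (Real.exp_pos (-1)).le
  have h5 : Real.exp 1 - 1 ≤ Real.exp (-1) * (α - 1) := by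
    have h5a : Real.exp (-1) * (Real.exp 1 * (Real.exp 1 - 1)) = Real.exp 1 - 1 := by
      rw [← mul_assoc, he1]; ring
    have := mul_le_mul_of_nonneg_left (show Real.exp 1 * (Real.exp 1 - 1) ≤ α - 1 by linarith) (Real.exp_pos (-1)).le
    linarith
  linarith

theorem stmt_6 (θ m α : ℝ) (hθ : θ ∈ Set.Ioo 0 (2 * Real.pi)) (hm : 1 ≤ m)
    (hα : Real.exp 1 * (Real.exp 1 - 1) + 1 ≤ α)
    (r s t : ℂ)
    (hr : r = Complex.exp (Complex.exp (θ * Complex.I)))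
    (hs : s = (m : ℂ) * Complex.exp (θ * Complex.I) * r)
    (hs0 : s ≠ 0)
    (ht : m * (1 + Real.cos θ) ≤ (1 + t / s).re) :
    Real.exp 1 - 1 ≤ ‖(α : ℂ) * s + t‖ := by
  have hm0 : (0:ℝ) < m := by linarith
  have habs_s : ‖s‖ = m * Real.exp (Real.cos θ) := by
    rw [hs, hr, norm_mul, norm_mul, Complex.norm_exp, Complex.norm_exp]
    simp [Complex.exp_ofReal_mul_I_re, abs_of_pos hm0, Complex.mul_I_re]
  have hfact : (α : ℂ) * s + t = s * ((α : ℂ) + t / s) := by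
    field_simp
  have hre : ((α : ℂ) + t / s).re = α + (t / s).re := by simp
  have hre1 : (1 + t / s).re = 1 + (t / s).re := by simp
  have hle : α - 1 + m * (1 + Real.cos θ) ≤ ‖(α : ℂ) + t / s‖ := by
    calc α - 1 + m * (1 + Real.cos θ) ≤ α - 1 + (1 + t / s).re := by linarith
    _ = ((α : ℂ) + t / s).re := by rw [hre, hre1]; ring
    _ ≤ ‖(α : ℂ) + t / s‖ := Complex.re_le_norm _
  have habs : ‖(α : ℂ) * s + t‖
      = m * Real.exp (Real.cos θ) * ‖(α : ℂ) + t / s‖ := by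
    rw [hfact, norm_mul, habs_s]
  rw [habs]
  set c := Real.cos θ with hc
  have hc1 : -1 ≤ c := Real.neg_one_le_cos θ
  have hc2 : c ≤ 1 := Real.cos_le_one θ
  have hE : Real.exp (-1) * (c + 2) ≤ Real.exp c := by
    have := Real.add_one_le_exp (c + 1)
    have h2 : Real.exp (-1) * Real.exp (c + 1) = Real.exp c := by
      rw [← Real.exp_add]; ring_nf
    nlinarith [Real.exp_pos (-1)]
  have hEpos : (0:ℝ) < Real.exp c := Real.exp_pos c
  have he1 : Real.exp (-1) * Real.exp 1 = 1 := by
    rw [← Real.exp_add]; simp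
  have hb : α - 1 + m * (1 + c) ≤ ‖(α : ℂ) + t / s‖ := hle
  have hbpos : (0:ℝ) < α - 1 + m * (1 + c) := by nlinarith [Real.exp_pos 1, Real.add_one_le_exp (1:ℝ)]
  -- reduce to real inequality: m * exp c * (α - 1 + m*(1+c)) ≥ e - 1
  have key : Real.exp 1 - 1 ≤ m * Real.exp c * (α - 1 + m * (1 + c)) :=
    stmt_6_aux m α c hm hα hc1 hc2
  calc Real.exp 1 - 1 ≤ m * Real.exp c * (α - 1 + m * (1 + c)) := key
    _ ≤ m * Real.exp c * ‖(α : ℂ) + t / s‖ := by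
        apply mul_le_mul_of_nonneg_left hb; positivity
end

section
/- Let α, β, γ ≥ 0 with α > 0, β ≤ 4α, and γ ≥ A e + α + β²/(8α) for some A with 0 < A ≤ 1. Let θ ∈ (0,2π), m ≥ 1, r = exp(e^{iθ}), s = m e^{iθ} r, and t, u ∈ ℂ satisfy Re(1 + t/s) ≥ m(1 + cos θ) and Re(u/s) ≥ m cos 2θ with cos 2θ ≥ 0. Then |α u + β t + γ s| ≥ A. -/
open Real Complex

/-! `|α u + β t + γ s| ≥ |s| Re((α u + β t + γ s)/s)` with `|s| = m e^{cos θ}`. The hypotheses bound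
that real part below by `α (2c² - 1) + β c + γ` (with `c = cos θ`, using `m ≥ 1` and `cos 2θ ≥ 0`),
and completing the square gives `2αc² + βc ≥ -β²/(8α)`, so it is at least `A e`. Finally
`m e^{c} · e ≥ e^{c + 1} ≥ 1` since `c ≥ -1`. -/

theorem Complex.norm_ofReal_mul_exp_mul_exp_exp {m : ℝ} (hm : 0 ≤ m) (θ : ℝ) :
    ‖(m : ℂ) * exp (θ * I) * exp (exp (θ * I))‖ = m * Real.exp (Real.cos θ) := by
  rw [norm_mul, norm_mul, norm_exp_ofReal_mul_I, norm_exp, exp_ofReal_mul_I_re, norm_real,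
    Real.norm_of_nonneg hm, mul_one]

theorem Complex.norm_mul_re_div_le_norm (z s : ℂ) : ‖s‖ * (z / s).re ≤ ‖z‖ := by
  rcases eq_or_ne s 0 with rfl | hs
  · simp
  calc ‖s‖ * (z / s).re ≤ ‖s‖ * ‖z / s‖ := by gcongr; exact re_le_norm _
    _ = ‖z‖ := by rw [norm_div, mul_div_cancel₀ _ (norm_ne_zero_iff.mpr hs)]

theorem neg_sq_div_le_two_mul_sq_add_mul {α : ℝ} (hα : 0 < α) (β c : ℝ) :
    -(β ^ 2 / (8 * α)) ≤ 2 * α * c ^ 2 + β * c := by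
  have h : 2 * α * c ^ 2 + β * c + β ^ 2 / (8 * α) = (4 * α * c + β) ^ 2 / (8 * α) := by
    field_simp; ring
  have : 0 ≤ (4 * α * c + β) ^ 2 / (8 * α) := by positivity
  linarith

theorem sub_sub_sq_div_le_mul_add_mul_add {α β γ m c x y : ℝ} (hα : 0 < α) (hβ : 0 ≤ β)
    (hm : 1 ≤ m) (hc : -1 ≤ c) (hc2 : 0 ≤ 2 * c ^ 2 - 1)
    (hx : m * (2 * c ^ 2 - 1) ≤ x) (hy : m * (1 + c) - 1 ≤ y) :
    γ - α - β ^ 2 / (8 * α) ≤ α * x + β * y + γ := by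
  have hαx : α * (2 * c ^ 2 - 1) ≤ α * x := by
    gcongr; exact (le_mul_of_one_le_left hc2 hm).trans hx
  have hβy : β * c ≤ β * y := by
    gcongr; linarith [le_mul_of_one_le_left (by linarith : (0 : ℝ) ≤ 1 + c) hm]
  linarith [neg_sq_div_le_two_mul_sq_add_mul hα β c]

theorem stmt_8_general (A α β γ θ m : ℝ)
    (hA : 0 < A) (hα : 0 < α) (hβ : 0 ≤ β)
    (hγ : A * Real.exp 1 + α + β ^ 2 / (8 * α) ≤ γ)
    (hcos : 0 ≤ Real.cos (2 * θ)) (hm : 1 ≤ m)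
    (r s t u : ℂ)
    (hr : r = Complex.exp (Complex.exp (θ * Complex.I)))
    (hs : s = (m : ℂ) * Complex.exp (θ * Complex.I) * r)
    (hs0 : s ≠ 0)
    (ht : m * (1 + Real.cos θ) ≤ (1 + t / s).re)
    (hu : m * Real.cos (2 * θ) ≤ (u / s).re) :
    A ≤ ‖(α : ℂ) * u + (β : ℂ) * t + (γ : ℂ) * s‖ := by
  set z := (α : ℂ) * u + (β : ℂ) * t + (γ : ℂ) * s
  have hnorm : ‖s‖ = m * Real.exp (Real.cos θ) := by
    rw [hs, hr]; exact norm_ofReal_mul_exp_mul_exp_exp (by linarith) θ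
  have hcos2 := Real.cos_two_mul θ
  have hre : (z / s).re = α * (u / s).re + β * (t / s).re + γ := by
    have : z / s = α * (u / s) + β * (t / s) + γ := by simp only [z]; field_simp
    simp [this]
  have hlower : A * Real.exp 1 ≤ (z / s).re := by
    rw [add_re, one_re] at ht
    rw [hre]
    linarith [sub_sub_sq_div_le_mul_add_mul_add (γ := γ) hα hβ hm (Real.neg_one_le_cos θ)
      (hcos2 ▸ hcos) (hcos2 ▸ hu) (by linarith : m * (1 + Real.cos θ) - 1 ≤ (t / s).re)]
  have hscale : 1 ≤ ‖s‖ * Real.exp 1 := by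
    rw [hnorm, mul_assoc, ← Real.exp_add]
    exact one_le_mul_of_one_le_of_one_le hm
      (Real.one_le_exp (by linarith [Real.neg_one_le_cos θ]))
  calc A ≤ A * (‖s‖ * Real.exp 1) := le_mul_of_one_le_right hA.le hscale
    _ = ‖s‖ * (A * Real.exp 1) := by ring
    _ ≤ ‖s‖ * (z / s).re := by gcongr
    _ ≤ ‖z‖ := norm_mul_re_div_le_norm z s

theorem stmt_8 (A α β γ θ m : ℝ)
    (hA : 0 < A) (hA1 : A ≤ 1) (hα : 0 < α) (hβ : 0 ≤ β) (hβα : β ≤ 4 * α)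
    (hγ : A * Real.exp 1 + α + β ^ 2 / (8 * α) ≤ γ)
    (hθ : θ ∈ Set.Ioo 0 (2 * Real.pi)) (hcos : 0 ≤ Real.cos (2 * θ)) (hm : 1 ≤ m)
    (r s t u : ℂ)
    (hr : r = Complex.exp (Complex.exp (θ * Complex.I)))
    (hs : s = (m : ℂ) * Complex.exp (θ * Complex.I) * r)
    (hs0 : s ≠ 0)
    (ht : m * (1 + Real.cos θ) ≤ (1 + t / s).re)
    (hu : m * Real.cos (2 * θ) ≤ (u / s).re) :
    A ≤ ‖(α : ℂ) * u + (β : ℂ) * t + (γ : ℂ) * s‖ :=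
  stmt_8_general A α β γ θ m hA hα hβ hγ hcos hm r s t u hr hs hs0 ht hu
end

section
/- Let q_β(z) = ((A−B)/(β+1))·z·₂F₁(1, 1 + 1/β; 2 + 1/β; −Bz) + β/(β+1) + 1/(β+1) for β > 0 and −1 ≤ B < A ≤ 1. Then q_β satisfies the linear ODE q'(z) + q(z)/(βz) = (1/(βz))·((1+Az)/(1+Bz)) on the punctured unit disc (away from z = 0 and z = −1/B). -/
open Complex

/-- The Gauss hypergeometric series ₂F₁(a,b;c;z). -/
noncomputable def gaussHyp (a b c z : ℂ) : ℂ :=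
  ∑' k : ℕ, ((ascPochhammer ℂ k).eval a * (ascPochhammer ℂ k).eval b /
    ((ascPochhammer ℂ k).eval c * (k.factorial : ℂ))) * z ^ k

/-!
Since `(1)ₖ = k!` and `(b)ₖ (b + k) = b (b + 1)ₖ`, the series `₂F₁(1, b; b + 1; w)` has
coefficients `b / (b + k)`; with `b = 1 + 1/β` this gives `q(z) = 1 + ∑ qCoeff β A B k * z^(k+1)`,
where `qCoeff β A B k = (A - B)(-B)^k / (β(k + 1) + 1)`. The operator `β z d/dz + 1` multiplies the
`k`-th term by `β(k + 1) + 1`, so `β z q' + q = 1 + (A - B) z ∑ (-B z)^k = (1 + A z) / (1 + B z)`.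
Termwise differentiation is legitimate because `|B| ≤ 1` keeps the coefficients bounded, so the
series converges locally uniformly on the unit disc.
-/

open Polynomial in
theorem ascPochhammer_eval_mul_add_natCast {R : Type*} [CommSemiring R] (n : ℕ) (b : R) :
    (ascPochhammer R n).eval b * (b + n) = b * (ascPochhammer R n).eval (b + 1) := by
  rw [← ascPochhammer_succ_eval, ascPochhammer_succ_left, eval_mul, eval_comp]
  simp

theorem gaussHyp_one_self_add_one (b w : ℂ) (hb : ∀ n : ℕ, b + n ≠ 0) :
    gaussHyp 1 b (b + 1) w = ∑' k : ℕ, b / (b + k) * w ^ k := by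
  refine tsum_congr fun k => congrArg (· * w ^ k) ?_
  have hpoch : (ascPochhammer ℂ k).eval (b + 1) ≠ 0 := by
    rw [Ne, ascPochhammer_eval_eq_zero_iff]
    rintro ⟨j, -, hj⟩
    exact hb (j + 1) (by push_cast; linear_combination hj)
  have hfac : (k.factorial : ℂ) ≠ 0 := by exact_mod_cast k.factorial_ne_zero
  rw [ascPochhammer_eval_one, div_eq_div_iff (mul_ne_zero hpoch hfac) (hb k)]
  linear_combination (k.factorial : ℂ) * ascPochhammer_eval_mul_add_natCast k b

section PowerSeries

variable {c : ℕ → ℂ} {C : ℝ}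

theorem norm_mul_pow_succ_le (hc : ∀ k, ‖c k‖ ≤ C) (k : ℕ) {w : ℂ} {r : ℝ} (hw : ‖w‖ ≤ r) :
    ‖c k * w ^ (k + 1)‖ ≤ C * r ^ (k + 1) := by
  rw [norm_mul, norm_pow]
  exact mul_le_mul (hc k) (pow_le_pow_left₀ (norm_nonneg w) hw _) (by positivity)
    ((norm_nonneg _).trans (hc k))

theorem summable_const_mul_pow_succ {r : ℝ} (hr0 : 0 ≤ r) (hr1 : r < 1) :
    Summable fun k : ℕ => C * r ^ (k + 1) :=
  ((summable_geometric_of_lt_one hr0 hr1).mul_left r).mul_left C |>.congr fun k => by ring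

theorem summable_mul_pow_succ (hc : ∀ k, ‖c k‖ ≤ C) {z : ℂ} (hz : ‖z‖ < 1) :
    Summable fun k => c k * z ^ (k + 1) :=
  .of_norm_bounded (summable_const_mul_pow_succ (norm_nonneg z) hz)
    fun k => norm_mul_pow_succ_le hc k le_rfl

theorem hasSum_deriv_tsum_mul_pow_succ (hc : ∀ k, ‖c k‖ ≤ C) {z : ℂ} (hz : ‖z‖ < 1) :
    HasSum (fun k => c k * ((k + 1) * z ^ k)) (deriv (fun w => ∑' k, c k * w ^ (k + 1)) z) := by
  obtain ⟨r, hzr, hr1⟩ := exists_between hz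
  have hderiv (k : ℕ) : deriv (fun w => c k * w ^ (k + 1)) z = c k * ((k + 1) * z ^ k) := by
    rw [((hasDerivAt_pow (k + 1) z).const_mul (c k)).deriv, add_tsub_cancel_right]
    push_cast
    ring
  simpa only [hderiv] using hasSum_deriv_of_summable_norm
    (summable_const_mul_pow_succ ((norm_nonneg z).trans hzr.le) hr1)
    (fun k => ((differentiable_pow (k + 1)).const_mul (c k)).differentiableOn)
    Metric.isOpen_ball (fun k w hw => norm_mul_pow_succ_le hc k (mem_ball_zero_iff.mp hw).le)
    (mem_ball_zero_iff.mpr hzr)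

theorem hasSum_euler_tsum_mul_pow_succ (β : ℂ) (hc : ∀ k, ‖c k‖ ≤ C) {z : ℂ} (hz : ‖z‖ < 1) :
    HasSum (fun k => (β * (k + 1) + 1) * c k * z ^ (k + 1))
      (β * z * deriv (fun w => ∑' k, c k * w ^ (k + 1)) z + ∑' k, c k * z ^ (k + 1)) := by
  refine (((hasSum_deriv_tsum_mul_pow_succ hc hz).mul_left (β * z)).add
    (summable_mul_pow_succ hc hz).hasSum).congr_fun fun k => ?_
  ring

end PowerSeries

noncomputable def qCoeff (β A B : ℝ) (k : ℕ) : ℂ := (A - B) * (-B) ^ k / (β * (k + 1) + 1)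

theorem qCoeff_denom_ne_zero {β : ℝ} (hβ : 0 ≤ β) (k : ℕ) : (β : ℂ) * (k + 1) + 1 ≠ 0 := by
  exact_mod_cast (by positivity : (0 : ℝ) < β * (k + 1) + 1).ne'

theorem norm_qCoeff_le {β A B : ℝ} (hβ : 0 ≤ β) (hB : |B| ≤ 1) (k : ℕ) :
    ‖qCoeff β A B k‖ ≤ |A - B| := by
  have hden : 1 ≤ β * (k + 1) + 1 := by nlinarith [k.cast_nonneg (α := ℝ)]
  have hreal : qCoeff β A B k = (((A - B) * (-B) ^ k / (β * (k + 1) + 1) : ℝ) : ℂ) := by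
    simp [qCoeff]
  rw [hreal, norm_real, Real.norm_eq_abs, abs_div, abs_mul, abs_pow, abs_neg,
    abs_of_pos (by linarith : (0 : ℝ) < β * (k + 1) + 1)]
  refine div_le_of_le_mul₀ (by linarith) (abs_nonneg _) ?_
  exact mul_le_mul_of_nonneg_left ((pow_le_one₀ (abs_nonneg B) hB).trans hden) (abs_nonneg _)

theorem hasSum_qCoeff_mul_pow_succ {β A B : ℝ} (hβ : 0 ≤ β) {z : ℂ} (hBz : ‖(B : ℂ) * z‖ < 1) :
    HasSum (fun k => (β * (k + 1) + 1) * qCoeff β A B k * z ^ (k + 1))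
      ((A - B) * z / (1 + B * z)) := by
  have hgeo := hasSum_geometric_of_norm_lt_one (by rwa [neg_mul, norm_neg] : ‖-(B : ℂ) * z‖ < 1)
  rw [neg_mul, sub_neg_eq_add] at hgeo
  rw [div_eq_mul_inv]
  refine (hgeo.mul_left ((A - B) * z)).congr_fun fun k => ?_
  rw [qCoeff, mul_div_cancel₀ _ (qCoeff_denom_ne_zero hβ k)]
  ring

theorem mul_gaussHyp_add_eq_tsum_qCoeff_add_one {β : ℝ} (hβ : 0 < β) (A B : ℝ) (w : ℂ) :
    ((A : ℂ) - B) / (β + 1) * w * gaussHyp 1 (1 + 1 / β) (2 + 1 / β) (-(B : ℂ) * w) +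
      (β : ℂ) / (β + 1) + 1 / (β + 1) = (∑' k, qCoeff β A B k * w ^ (k + 1)) + 1 := by
  have hβ1 : (β : ℂ) + 1 ≠ 0 := by exact_mod_cast (by linarith : β + 1 ≠ 0)
  have hb (n : ℕ) : 1 + 1 / (β : ℂ) + n ≠ 0 := by
    exact_mod_cast (by positivity : (0 : ℝ) < 1 + 1 / β + n).ne'
  rw [show (2 : ℂ) + 1 / β = 1 + 1 / β + 1 by ring, gaussHyp_one_self_add_one _ _ hb,
    ← tsum_mul_left, add_assoc, ← add_div, div_self hβ1]
  congr 1
  refine tsum_congr fun k => ?_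
  have hβ0 : (β : ℂ) ≠ 0 := by exact_mod_cast hβ.ne'
  have hden := qCoeff_denom_ne_zero hβ.le k
  have hratio : (1 + 1 / (β : ℂ)) / (1 + 1 / β + k) = (β + 1) / (β * (k + 1) + 1) := by
    rw [div_eq_div_iff (hb k) hden]
    field_simp
    ring
  rw [hratio, qCoeff]
  field_simp
  ring

theorem stmt_13 (β A B : ℝ) (hβ : 0 < β) (hB : -1 ≤ B) (hBA : B < A) (hA : A ≤ 1)
    (q : ℂ → ℂ)
    (hq : q = fun z => ((A : ℂ) - B) / (β + 1) * z *
        gaussHyp 1 (1 + 1 / β) (2 + 1 / β) (-(B : ℂ) * z) + (β : ℂ) / (β + 1) + 1 / (β + 1)) :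
    ∀ z : ℂ, ‖z‖ < 1 → z ≠ 0 → 1 + (B : ℂ) * z ≠ 0 →
      deriv q z + q z / ((β : ℂ) * z) =
        1 / ((β : ℂ) * z) * ((1 + (A : ℂ) * z) / (1 + (B : ℂ) * z)) := by
  intro z hz hz0 hBz
  have hB1 : |B| ≤ 1 := abs_le.mpr ⟨hB, (hBA.trans_le hA).le⟩
  have hBz1 : ‖(B : ℂ) * z‖ < 1 := by
    rw [norm_mul, norm_real, Real.norm_eq_abs]
    nlinarith [norm_nonneg z, abs_nonneg B]
  have hq' : q = fun w => (∑' k, qCoeff β A B k * w ^ (k + 1)) + 1 :=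
    hq.trans (funext (mul_gaussHyp_add_eq_tsum_qCoeff_add_one hβ A B))
  have key := (hasSum_euler_tsum_mul_pow_succ β (norm_qCoeff_le (A := A) hβ.le hB1) hz).unique
    (hasSum_qCoeff_mul_pow_succ hβ.le hBz1)
  have hβ0 : (β : ℂ) ≠ 0 := by exact_mod_cast hβ.ne'
  have hrhs : (1 + (A : ℂ) * z) / (1 + B * z) = (A - B) * z / (1 + B * z) + 1 := by
    rw [div_add_one hBz]
    ring
  rw [hq', deriv_add_const, hrhs, ← key]
  field_simp
  ring
end
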